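/- Let B ⊆ ℂ^n be a brick partitioned into subbricks β_{i,j} by hyperplanes orthogonal to the real coordinate axes, and let each β_{i,j} be shrunk to a closed subbrick β̃_{i,j} contained in the interior of β_{i,j} by moving each face inward. Then the union B̃ = ⋃_{i,j} β̃_{i,j} is polynomially convex. -/

import Mathlib

/-!
The shrunk brick is a product, over the coordinates, of plane sets `A ×ℂ B` with `A, B ⊆ ℝ`
finite unions of compact intervals, and a product of polynomially convex plane sets is
polynomially convex (separate in the one coordinate where the point leaves its factor).
Every point `w ∉ A ×ℂ B` lies on a horizontal or vertical line missing `A ×ℂ B`, so it lies in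
the unbounded component of the complement of `K = A ×ℂ B`. In the uniform closure `S` of the
polynomials in `C(K, ℂ)`, the frontier of the spectrum of `ζ ↦ ζ` lies in its spectrum `K` in
`C(K, ℂ)`, so its spectrum in `S` is `K` plus bounded components of `Kᶜ`. Hence `ζ - w` is
invertible in `S`, and a polynomial `q` close to `(ζ - w)⁻¹` gives the separating polynomial
`1 - (w - ζ) q`, which is small on `K` and equals `1` at `w`.
-/

/-- A compact set `K ⊆ ℂ^n` is polynomially convex if for every `z ∉ K` there is a
holomorphic polynomial `p` with `|p(z)| > |p(ζ)|` for all `ζ ∈ K`. -/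
def PolyConvex {n : ℕ} (K : Set (Fin n → ℂ)) : Prop :=
  IsCompact K ∧ ∀ z ∉ K, ∃ p : MvPolynomial (Fin n) ℂ,
    ∀ w ∈ K, ‖MvPolynomial.eval w p‖ < ‖MvPolynomial.eval z p‖

open Polynomial Set Bornology

def PolyConvex₁ (K : Set ℂ) : Prop :=
  IsCompact K ∧ ∀ w ∉ K, ∃ p : ℂ[X], ∀ ζ ∈ K, ‖p.eval ζ‖ < ‖p.eval w‖

lemma not_isBounded_range_add_smul {E : Type*} [NormedAddCommGroup E] [NormedSpace ℝ E]
    (w : E) {u : E} (hu : u ≠ 0) : ¬IsBounded (range fun t : ℝ => w + t • u) := by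
  rw [isBounded_iff_forall_norm_le]
  rintro ⟨R, hR⟩
  have hfar := hR _ ⟨(|R| + ‖w‖ + 1) / ‖u‖, rfl⟩
  have := norm_sub_le (w + ((|R| + ‖w‖ + 1) / ‖u‖) • u) w
  rw [add_sub_cancel_left, norm_smul, Real.norm_eq_abs, abs_of_nonneg (by positivity),
    div_mul_cancel₀ _ (norm_ne_zero_iff.mpr hu)] at this
  linarith [le_abs_self R]

lemma not_isBounded_connectedComponentIn_compl {E : Type*} [NormedAddCommGroup E]
    [NormedSpace ℝ E] {K : Set E} {w u : E} (hu : u ≠ 0) (hline : ∀ t : ℝ, w + t • u ∉ K) :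
    ¬IsBounded (connectedComponentIn Kᶜ w) := by
  have hsub : (range fun t : ℝ => w + t • u) ⊆ connectedComponentIn Kᶜ w :=
    (isPreconnected_range (by fun_prop)).subset_connectedComponentIn ⟨0, by simp⟩
      (range_subset_iff.mpr hline)
  exact fun h => not_isBounded_range_add_smul w hu (h.subset hsub)

lemma exists_polynomial_norm_lt_of_not_isBounded {K : Set ℂ} (hK : IsCompact K) {w : ℂ}
    (hunb : ¬IsBounded (connectedComponentIn Kᶜ w)) :
    ∃ p : ℂ[X], ∀ ζ ∈ K, ‖p.eval ζ‖ < ‖p.eval w‖ := by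
  have := isCompact_iff_compactSpace.mp hK
  let S := (polynomialFunctions K).topologicalClosure
  have : IsClosed (S : Set C(K, ℂ)) := Subalgebra.isClosed_topologicalClosure _
  let x : S := ⟨X.toContinuousMapOnAlgHom K,
    (polynomialFunctions K).le_topologicalClosure ⟨X, trivial, rfl⟩⟩
  have hσ : spectrum ℂ (x : C(K, ℂ)) = K := by
    rw [ContinuousMap.spectrum_eq_range]
    ext
    simp [x]
  obtain ⟨u, hu⟩ : IsUnit (algebraMap ℂ S w - x) := by
    rw [← spectrum.notMem_iff]
    exact fun h => hunb (hσ ▸ Subalgebra.spectrum_isBounded_connectedComponentIn S x h)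
  obtain ⟨_, ⟨q, -, rfl⟩, hq⟩ :=
    Metric.mem_closure_iff.mp u.inv.2 (‖(u : C(K, ℂ))‖ + 1)⁻¹ (by positivity)
  have hu_val : (u : C(K, ℂ)) = (C w - X).toContinuousMapOnAlgHom K := by
    rw [hu, map_sub, ← Polynomial.algebraMap_eq, AlgHom.commutes]
    rfl
  have hsep : (1 - (C w - X) * q).toContinuousMapOnAlgHom K =
      (u : C(K, ℂ)) * ((u.inv : C(K, ℂ)) - q.toContinuousMapOnAlgHom K) := by
    have hinv : (u : C(K, ℂ)) * (u.inv : C(K, ℂ)) = 1 := congrArg Subtype.val u.val_inv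
    rw [mul_sub, hinv, hu_val, map_sub, map_one, map_mul]
  have hlt : ‖(1 - (C w - X) * q).toContinuousMapOnAlgHom K‖ < 1 := by
    rw [dist_eq_norm] at hq
    calc _ ≤ ‖(u : C(K, ℂ))‖ * ‖(u.inv : C(K, ℂ)) - q.toContinuousMapOnAlgHom K‖ :=
          hsep ▸ norm_mul_le _ _
      _ ≤ ‖(u : C(K, ℂ))‖ * (‖(u : C(K, ℂ))‖ + 1)⁻¹ := by gcongr; exact hq.le
      _ < 1 := by
          rw [mul_inv_lt_iff₀ (by positivity)]
          linarith
  refine ⟨1 - (C w - X) * q, fun ζ hζ => ?_⟩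
  simpa using (ContinuousMap.norm_coe_le_norm _ ⟨ζ, hζ⟩).trans_lt hlt

lemma polyConvex₁_reProdIm {A B : Set ℝ} (hA : IsCompact A) (hB : IsCompact B) :
    PolyConvex₁ (A ×ℂ B) := by
  refine ⟨hA.reProdIm hB, fun w hw => exists_polynomial_norm_lt_of_not_isBounded
    (hA.reProdIm hB) ?_⟩
  rw [Complex.mem_reProdIm, not_and_or] at hw
  rcases hw with hre | him
  · refine not_isBounded_connectedComponentIn_compl Complex.I_ne_zero fun t ht => hre ?_
    simpa using (Complex.mem_reProdIm.mp ht).1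
  · refine not_isBounded_connectedComponentIn_compl one_ne_zero fun t ht => him ?_
    simpa using (Complex.mem_reProdIm.mp ht).2

lemma polyConvex_pi {n : ℕ} {K : Fin n → Set ℂ} (hK : ∀ t, PolyConvex₁ (K t)) :
    PolyConvex (univ.pi K) := by
  refine ⟨isCompact_univ_pi fun t => (hK t).1, fun z hz => ?_⟩
  obtain ⟨t, ht⟩ : ∃ t, z t ∉ K t := by simpa [mem_univ_pi] using hz
  obtain ⟨p, hp⟩ := (hK t).2 _ ht
  have heval (v : Fin n → ℂ) :
      MvPolynomial.eval v (aeval (MvPolynomial.X t) p) = p.eval (v t) := by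
    simp [← MvPolynomial.coe_aeval_eq_eval, ← aeval_algHom_apply]
  refine ⟨aeval (MvPolynomial.X t) p, fun v hv => ?_⟩
  rw [heval, heval]
  exact hp _ (hv t trivial)

lemma iUnion_brick_eq_pi_reProdIm {n : ℕ} (r s : Fin n → ℕ) (a b c d : Fin n → ℕ → ℝ) :
    (⋃ i ∈ {i : Fin n → ℕ | ∀ t, i t ≤ r t}, ⋃ j ∈ {j : Fin n → ℕ | ∀ t, j t ≤ s t},
        {z : Fin n → ℂ | ∀ t,
          a t (i t) ≤ (z t).re ∧ (z t).re ≤ b t (i t + 1) ∧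
          c t (j t) ≤ (z t).im ∧ (z t).im ≤ d t (j t + 1)}) =
      univ.pi fun t => (⋃ i ∈ Iic (r t), Icc (a t i) (b t (i + 1))) ×ℂ
        (⋃ j ∈ Iic (s t), Icc (c t j) (d t (j + 1))) := by
  ext z
  simp only [mem_iUnion, mem_ofPred_eq, mem_univ_pi, Complex.mem_reProdIm, mem_Iic, mem_Icc,
    exists_prop]
  constructor
  · rintro ⟨i, hi, j, hj, hz⟩ t
    obtain ⟨h1, h2, h3, h4⟩ := hz t
    exact ⟨⟨i t, hi t, h1, h2⟩, j t, hj t, h3, h4⟩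
  · intro hz
    choose i hi hre using fun t => (hz t).1
    choose j hj him using fun t => (hz t).2
    exact ⟨i, hi, j, hj, fun t => ⟨(hre t).1, (hre t).2, (him t).1, (him t).2⟩⟩

theorem polyConvex_stratification_general (n : ℕ) (r s : Fin n → ℕ)
    (lamx' lamx'' lamy' lamy'' : Fin n → ℕ → ℝ) :
    PolyConvex (⋃ i ∈ {i : Fin n → ℕ | ∀ t, i t ≤ r t},
      ⋃ j ∈ {j : Fin n → ℕ | ∀ t, j t ≤ s t},
        {z : Fin n → ℂ | ∀ t,
          lamx' t (i t) ≤ (z t).re ∧ (z t).re ≤ lamx'' t (i t + 1) ∧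
          lamy' t (j t) ≤ (z t).im ∧ (z t).im ≤ lamy'' t (j t + 1)}) := by
  rw [iUnion_brick_eq_pi_reProdIm]
  exact polyConvex_pi fun t => polyConvex₁_reProdIm
    ((finite_Iic _).isCompact_biUnion fun _ _ => isCompact_Icc)
    ((finite_Iic _).isCompact_biUnion fun _ _ => isCompact_Icc)

/-- A stratification of a brick is polynomially convex.  The brick
`B = {z : lamx t 0 ≤ Re z_t ≤ lamx t (r t + 1), lamy t 0 ≤ Im z_t ≤ lamy t (s t + 1)}`
is partitioned into subbricks `β_{i,j}` by the grid hyperplanes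
`Re z_t = lamx t i` (`0 ≤ i ≤ r t + 1`) and `Im z_t = lamy t j` (`0 ≤ j ≤ s t + 1`),
and each subbrick is shrunk to `β̃_{i,j}` with faces moved strictly inward to the
primed coordinates.  The union `B̃ = ⋃ β̃_{i,j}` is polynomially convex. -/
theorem polyConvex_stratification (n : ℕ) (r s : Fin n → ℕ)
    (lamx lamx' lamx'' lamy lamy' lamy'' : Fin n → ℕ → ℝ)
    (hx : ∀ t, ∀ i ≤ r t, lamx t i < lamx t (i + 1))
    (hy : ∀ t, ∀ j ≤ s t, lamy t j < lamy t (j + 1))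
    (hx' : ∀ t, ∀ i ≤ r t,
      lamx t i < lamx' t i ∧ lamx' t i ≤ lamx'' t (i + 1) ∧ lamx'' t (i + 1) < lamx t (i + 1))
    (hy' : ∀ t, ∀ j ≤ s t,
      lamy t j < lamy' t j ∧ lamy' t j ≤ lamy'' t (j + 1) ∧ lamy'' t (j + 1) < lamy t (j + 1)) :
    PolyConvex (⋃ i ∈ {i : Fin n → ℕ | ∀ t, i t ≤ r t},
      ⋃ j ∈ {j : Fin n → ℕ | ∀ t, j t ≤ s t},
        {z : Fin n → ℂ | ∀ t,
          lamx' t (i t) ≤ (z t).re ∧ (z t).re ≤ lamx'' t (i t + 1) ∧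
          lamy' t (j t) ≤ (z t).im ∧ (z t).im ≤ lamy'' t (j t + 1)}) :=
  polyConvex_stratification_general n r s lamx' lamx'' lamy' lamy''
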